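/- arXiv:2104.01502 — 2 statements merged into one kernel-verified Lean document; each statement's English description precedes it below -/
import Mathlib

section
/- Let C̄ ∈ {0,1}^{N×N} be the adjacency matrix of the directed cycle with self-loops on N vertices. Then the set { A_N A_{N−1} ⋯ A_1 : A_1,…,A_N ∈ spr(C̄) } is dense in the space of N×N complex matrices; equivalently, every linear transform T ∈ ℂ^{N×N} can be approximated to arbitrary accuracy by N-fold products of matrices in spr(C̄). -/
set_option maxHeartbeats 1000000



open Matrix

/-- The sparsity class of a (real, structural/adjacency) matrix `A`:
complex matrices whose entries vanish wherever `A` vanishes. -/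
def spr {N : ℕ} (A : Matrix (Fin N) (Fin N) ℝ) : Set (Matrix (Fin N) (Fin N) ℂ) :=
  {Q | ∀ n l, A n l = 0 → Q n l = 0}

/-- Adjacency matrix of the directed cycle with self-loops on `N` vertices:
entry `(n, l)` is `1` iff `l = n` or `l = n + 1 (mod N)`. -/
def cycleMat (N : ℕ) : Matrix (Fin N) (Fin N) ℝ :=
  Matrix.of fun n l => if l = n ∨ (l : ℕ) = ((n : ℕ) + 1) % N then 1 else 0

namespace CycFact
variable {N : ℕ} [NeZero N]
open scoped Fin.NatCast Fin.CommRing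

/-! ### Fin N modular arithmetic helpers -/

lemma val_cast (m : ℕ) (h : m < N) : ((m : Fin N)).val = m := Fin.val_cast_of_lt h
lemma cast_val (x : Fin N) : ((x.val : ℕ) : Fin N) = x := Fin.cast_val_eq_self x

omit [NeZero N] in
lemma val_lt (x : Fin N) : x.val < N := x.isLt

lemma cast_sub_cast {a b : ℕ} (hba : b ≤ a) : ((a - b : ℕ) : Fin N) = (a : Fin N) - b := by
  have : ((a - b : ℕ) : Fin N) + b = (a : Fin N) := by
    rw [← Nat.cast_add, Nat.sub_add_cancel hba]
  linear_combination this

lemma val_pos {n l : Fin N} (h : l ≠ n) : 1 ≤ (l - n).val := by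
  rcases Nat.eq_zero_or_pos (l - n).val with h0 | h0
  · exact absurd (sub_eq_zero.1 (by rw [← cast_val (l - n), h0, Nat.cast_zero])) h
  · exact h0

lemma sub_val_eq {n l : Fin N} (h : l ≠ n) : (l - (n+1)).val = (l - n).val - 1 := by
  have h1 := val_pos h
  have : l - (n + 1) = (((l - n).val - 1 : ℕ) : Fin N) := by
    rw [cast_sub_cast h1, cast_val, Nat.cast_one]; ring
  rw [this, val_cast]
  have := val_lt (l - n); omega

lemma eq_add_val (n l : Fin N) : l = n + (((l - n).val : ℕ) : Fin N) := by
  rw [cast_val]; ring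

lemma neg_one_val (h2 : 2 ≤ N) {n : Fin N} : ((n : Fin N) - (n + 1)).val = N - 1 := by
  have : (n : Fin N) - (n+1) = ((N - 1 : ℕ) : Fin N) := by
    rw [cast_sub_cast (by omega), Nat.cast_one, CharP.cast_eq_zero]; ring
  rw [this, val_cast]; omega

lemma ne_add_one (n : Fin N) (h2 : 2 ≤ N) : n ≠ n + 1 := by
  intro h
  have : (1 : Fin N) = 0 := by linear_combination -h
  have := congrArg Fin.val this
  rw [Fin.val_one'] at this
  simp at this
  omega

lemma add_one_iff_val (n l : Fin N) : l = n + 1 ↔ l.val = (n.val + 1) % N := by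
  constructor
  · rintro rfl
    rw [show n + 1 = ((n.val + 1 : ℕ) : Fin N) by rw [Nat.cast_add, cast_val, Nat.cast_one],
      Fin.val_natCast]
  · intro h
    have : l = ((n.val + 1 : ℕ) : Fin N) := by
      rw [← cast_val l, h]
      conv_rhs => rw [← Nat.mod_add_div (n.val+1) N]
      push_cast [CharP.cast_eq_zero]
      ring
    rw [this, Nat.cast_add, cast_val, Nat.cast_one]

lemma sub_cast_val (a b : ℕ) (ha : a < N) (hb : b < N) :
    ((a : Fin N) - (b : Fin N)).val = if b ≤ a then a - b else N + a - b := by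
  split_ifs with h
  · have : ((a : Fin N) - b) = ((a - b : ℕ) : Fin N) := by
      rw [cast_sub_cast h]
    rw [this, val_cast _ (by omega)]
  · have : ((a : Fin N) - b) = ((N + a - b : ℕ) : Fin N) := by
      have : ((N + a - b : ℕ) : Fin N) + b = (a : Fin N) := by
        rw [← Nat.cast_add, Nat.sub_add_cancel (by omega), Nat.cast_add,
          CharP.cast_eq_zero, zero_add]
      linear_combination this.symm
    rw [this, val_cast _ (by omega)]

/-! ### basic defs -/

def sprP (Q : Matrix (Fin N) (Fin N) ℂ) : Prop :=
  ∀ n l : Fin N, l ≠ n → l ≠ n + 1 → Q n l = 0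

def BandP (k : ℕ) (M : Matrix (Fin N) (Fin N) ℂ) : Prop :=
  ∀ n l : Fin N, k < (l - n).val → M n l = 0

/-! ### window sums -/

lemma sum_shift (n : Fin N) (F : Fin N → ℂ) :
    ∑ j : Fin N, F j = ∑ m ∈ Finset.range N, F (n + (m : Fin N)) := by
  rw [← Fin.sum_univ_eq_sum_range (fun m => F (n + (m : Fin N))) N]
  have : ∀ m : Fin N, F (n + ((m.val : ℕ) : Fin N)) = F (n + m) := fun m => by rw [cast_val]
  simp_rw [this]
  exact (Fintype.sum_equiv (Equiv.addLeft n) _ _ (fun m => rfl)).symm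

lemma band_win {k' : ℕ} {M : Matrix (Fin N) (Fin N) ℂ} (hM : BandP k' M)
    (hk'N : k' < N) (n : Fin N) {m : ℕ} (hm1 : k' < m) (hm2 : m < N) :
    M (n + (m : Fin N)) (n + (k' : Fin N)) = 0 := by
  apply hM
  have : (n + (k' : Fin N)) - (n + (m : Fin N)) = (k' : Fin N) - (m : Fin N) := by ring
  rw [this, sub_cast_val k' m hk'N hm2, if_neg (by omega)]
  omega

lemma window_sum {k' : ℕ} {M : Matrix (Fin N) (Fin N) ℂ} (hM : BandP k' M)
    (hk'N : k' < N) (n : Fin N) (g : ℕ → ℂ) (p : Fin N → ℂ) :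
    ∑ j : Fin N, M j (n + (k' : Fin N)) * g ((j - n).val) * p j
      = ∑ m ∈ Finset.range (k' + 1),
          M (n + (m : Fin N)) (n + (k' : Fin N)) * g m * p (n + (m : Fin N)) := by
  rw [sum_shift n]
  rw [← Finset.sum_range_add_sum_Ico _ (Nat.succ_le_of_lt hk'N)]
  have h2 : ∀ m ∈ Finset.Ico (k'+1) N,
      M (n + (m : Fin N)) (n + (k' : Fin N)) * g (((n + (m : Fin N)) - n).val)
        * p (n + (m : Fin N)) = 0 := by
    intro m hm
    rw [Finset.mem_Ico] at hm
    rw [band_win hM hk'N n (by omega) hm.2]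
    ring
  rw [Finset.sum_eq_zero h2, add_zero]
  apply Finset.sum_congr rfl
  intro m hm
  rw [Finset.mem_range] at hm
  have : ((n + (m : Fin N)) - n) = (m : Fin N) := by ring
  rw [this, val_cast m (by omega)]

lemma telescope (μ : ℂ) (p : Fin N → ℂ) (hp : ∀ j, p j ≠ 0) (n : Fin N) (m : ℕ) :
    ∏ i ∈ Finset.range m, (-μ * p ((n + (i : Fin N)) + 1) / p (n + (i : Fin N)))
      = (-μ) ^ m * p (n + (m : Fin N)) / p n := by
  induction m with
  | zero => simp [hp n]
  | succ m ih =>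
      rw [Finset.prod_range_succ, ih]
      have h1 : (n + (m : Fin N)) + 1 = n + ((m+1 : ℕ) : Fin N) := by push_cast; ring
      rw [h1, div_mul_div_comm,
        show (-μ)^m * p (n+((m:ℕ):Fin N)) * (-μ * p (n+((m+1:ℕ):Fin N)))
            = p (n+((m:ℕ):Fin N)) * ((-μ)^(m+1) * p (n+((m+1:ℕ):Fin N))) from by ring,
        show p n * p (n+((m:ℕ):Fin N)) = p (n+((m:ℕ):Fin N)) * p n from by ring,
        mul_div_mul_left _ _ (hp _)]

/-! ### determinant certificate -/

open Polynomial in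
noncomputable def phiP (k' : ℕ) (M1 : Matrix (Fin N) (Fin N) ℂ) :
    Matrix (Fin N) (Fin N) (Polynomial ℂ) :=
  fun n j => C (M1 j (n + (k' : Fin N))) * X ^ ((j - n).val)

open Polynomial in
lemma phiP_term (k' : ℕ) (M1 : Matrix (Fin N) (Fin N) ℂ) (σ : Equiv.Perm (Fin N)) :
    ∏ i : Fin N, phiP k' M1 (σ i) i
      = C (∏ i : Fin N, M1 i (σ i + (k' : Fin N)))
          * X ^ (∑ i : Fin N, (i - σ i).val) := by
  unfold phiP
  rw [Finset.prod_mul_distrib, ← map_prod, Finset.prod_pow_eq_pow_sum]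

open Polynomial in
lemma det_coeff_ne_zero (k' : ℕ) (hk'N : k' < N) (M1 : Matrix (Fin N) (Fin N) ℂ)
    (hband : BandP k' M1) (hd : ∀ n, M1 n n ≠ 0) :
    ((phiP k' M1).det).coeff (N * k') ≠ 0 := by
  rw [Matrix.det_apply, Polynomial.finset_sum_coeff]
  set τ : Equiv.Perm (Fin N) := Equiv.subRight ((k' : Fin N)) with hτ
  have hterm : ∀ σ : Equiv.Perm (Fin N),
      (Equiv.Perm.sign σ • ∏ i : Fin N, phiP k' M1 (σ i) i).coeff (N * k')
        = Equiv.Perm.sign σ • ((∏ i : Fin N, M1 i (σ i + (k' : Fin N)))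
            * if N * k' = ∑ i : Fin N, (i - σ i).val then 1 else 0) := by
    intro σ
    rw [phiP_term, Polynomial.coeff_smul, Polynomial.coeff_C_mul, Polynomial.coeff_X_pow]
  rw [Finset.sum_congr rfl (fun σ _ => hterm σ)]
  rw [Finset.sum_eq_single τ]
  · have h1 : ∀ i : Fin N, τ i + (k' : Fin N) = i := by
      intro i; simp only [hτ, Equiv.subRight_apply]; ring
    have h2 : ∀ i : Fin N, (i - τ i).val = k' := by
      intro i
      have h : i - τ i = (k' : Fin N) := by
        simp only [hτ, Equiv.subRight_apply]; ring
      rw [h, val_cast _ hk'N]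
    have h3 : (∑ i : Fin N, (i - τ i).val) = N * k' := by
      rw [Finset.sum_congr rfl (fun i _ => h2 i), Finset.sum_const, Finset.card_univ,
        Fintype.card_fin, smul_eq_mul]
    rw [if_pos h3.symm, mul_one]
    have h4 : (∏ i : Fin N, M1 i (τ i + (k' : Fin N))) ≠ 0 := by
      rw [Finset.prod_congr rfl (fun i _ => by rw [h1 i])]
      exact Finset.prod_ne_zero_iff.2 (fun i _ => hd i)
    rcases Int.units_eq_one_or (Equiv.Perm.sign τ) with h | h <;> rw [h]
    · rwa [one_smul]
    · rw [Units.neg_smul, one_smul]; exact neg_ne_zero.2 h4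
  · intro σ _ hσ
    by_cases hall : ∀ i : Fin N, (i - σ i).val ≤ k'
    · have hlt : (∑ i : Fin N, (i - σ i).val) < N * k' := by
        obtain ⟨i0, hi0⟩ : ∃ i0, σ i0 ≠ τ i0 := by
          by_contra hc
          push_neg at hc
          exact hσ (Equiv.ext hc)
        have hi0' : (i0 - σ i0).val < k' := by
          rcases Nat.lt_or_ge ((i0 - σ i0).val) k' with h | h
          · exact h
          · exfalso
            have : (i0 - σ i0).val = k' := le_antisymm (hall i0) h
            have : i0 - σ i0 = (k' : Fin N) := by
              rw [← cast_val (i0 - σ i0), this]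
            have : σ i0 = i0 - (k' : Fin N) := by linear_combination -this
            exact hi0 (by simp only [hτ, Equiv.subRight_apply]; exact this)
        calc (∑ i : Fin N, (i - σ i).val)
            < ∑ i : Fin N, k' := by
              apply Finset.sum_lt_sum (fun i _ => hall i) ⟨i0, Finset.mem_univ i0, hi0'⟩
          _ = N * k' := by
              rw [Finset.sum_const, Finset.card_univ, Fintype.card_fin, smul_eq_mul]
      rw [if_neg (by omega), mul_zero, smul_zero]
    · push_neg at hall
      obtain ⟨i0, hi0⟩ := hall
      have hz : M1 i0 (σ i0 + (k' : Fin N)) = 0 := by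
        apply hband
        have he : σ i0 + (k' : Fin N) - i0 = (k' : Fin N) - (((i0 - σ i0).val : ℕ) : Fin N) := by
          rw [cast_val]; ring
        rw [he, sub_cast_val k' _ hk'N (i0 - σ i0).isLt, if_neg (by omega)]
        have := (i0 - σ i0).isLt
        omega
      rw [Finset.prod_eq_zero (Finset.mem_univ i0) hz, zero_mul, smul_zero]
  · intro h; exact absurd (Finset.mem_univ τ) h

open Polynomial in
lemma det_eval (k' : ℕ) (M1 : Matrix (Fin N) (Fin N) ℂ) (μ : ℂ) :
    ((phiP k' M1).det).eval μ
      = Matrix.det (Matrix.of fun n j : Fin N =>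
          M1 j (n + (k' : Fin N)) * μ ^ ((j - n).val)) := by
  rw [← Polynomial.coe_evalRingHom, RingHom.map_det]
  congr 1
  ext n j
  simp [RingHom.mapMatrix_apply, phiP]

open Polynomial in
lemma det_eval_zero (k' : ℕ) (M1 : Matrix (Fin N) (Fin N) ℂ) :
    ((phiP k' M1).det).eval 0 = ∏ n : Fin N, M1 n (n + (k' : Fin N)) := by
  rw [det_eval]
  have : (Matrix.of fun n j : Fin N => M1 j (n + (k' : Fin N)) * (0:ℂ) ^ ((j - n).val))
      = Matrix.diagonal (fun n => M1 n (n + (k' : Fin N))) := by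
    ext n j
    rw [Matrix.diagonal_apply, Matrix.of_apply]
    by_cases h : n = j
    · subst h; rw [if_pos rfl, sub_self]
      norm_num
    · rw [if_neg h]
      have h1 : (j - n) ≠ 0 := sub_ne_zero.2 (Ne.symm h)
      have h2 : (j - n).val ≠ 0 := fun hc => h1 (by rw [← cast_val (j-n), hc, Nat.cast_zero])
      rw [zero_pow h2, mul_zero]
  rw [this, Matrix.det_diagonal]



lemma window_nonzero (k' : ℕ) (hk'N : k' < N) (M1 : Matrix (Fin N) (Fin N) ℂ)
    (hd : ∀ n, M1 n n ≠ 0) (μ : ℂ) (hμ : μ ≠ 0) (p : Fin N → ℂ) (hp : p ≠ 0)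
    (heq : ∀ n : Fin N, ∑ m ∈ Finset.range (k'+1),
      M1 (n + (m : Fin N)) (n + (k' : Fin N)) * μ^m * p (n + (m : Fin N)) = 0)
    (c : Fin N) : ∃ m, m ≤ k' ∧ p (c + (m : Fin N)) ≠ 0 := by
  by_contra hcon
  push_neg at hcon
  have key : ∀ i : ℕ, p (c + (i : Fin N)) = 0 := by
    intro i
    induction i using Nat.strong_induction_on with
    | _ i ih =>
      by_cases hik : i ≤ k'
      · exact hcon i hik
      · push_neg at hik
        set n := c + ((i - k' : ℕ) : Fin N) with hn
        have hred : ∀ m ∈ Finset.range (k'+1), m ≠ k' →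
            M1 (n + (m : Fin N)) (n + (k' : Fin N)) * μ^m * p (n + (m : Fin N)) = 0 := by
          intro m hm hne
          rw [Finset.mem_range] at hm
          have hidx : n + (m : Fin N) = c + ((i - k' + m : ℕ) : Fin N) := by
            rw [hn]; push_cast; ring
          rw [hidx, ih (i - k' + m) (by omega), mul_zero]
        have hsingle := (Finset.sum_eq_single_of_mem k'
          (Finset.mem_range.2 (by omega)) hred).symm.trans (heq n)
        have hidx2 : n + (k' : Fin N) = c + (i : Fin N) := by
          rw [hn, add_assoc, ← Nat.cast_add, Nat.sub_add_cancel (by omega)]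
        rw [hidx2] at hsingle
        rcases mul_eq_zero.1 hsingle with h | h
        · rcases mul_eq_zero.1 h with h1 | h1
          · exact absurd h1 (hd _)
          · exact absurd h1 (pow_ne_zero _ hμ)
        · exact h
  apply hp
  funext j
  rw [eq_add_val c j]
  exact key _

/-! ### the peeled factor and quotient -/

noncomputable def Amat (e : Fin N → ℂ) : Matrix (Fin N) (Fin N) ℂ :=
  fun n l => if l = n then 1 else if l = n + 1 then e n else 0

lemma Amat_spr (e : Fin N → ℂ) : sprP (Amat e) := by
  intro n l h1 h2
  unfold Amat
  rw [if_neg h1, if_neg h2]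

noncomputable def Bmat (k : ℕ) (e : Fin N → ℂ) (M2 : Matrix (Fin N) (Fin N) ℂ) :
    Matrix (Fin N) (Fin N) ℂ :=
  fun r c =>
    if (c - r).val ≤ k then
      ∑ m ∈ Finset.range ((c - r).val + 1),
        (-1:ℂ)^m * (∏ i ∈ Finset.range m, e (r + (i : Fin N))) * M2 (r + (m : Fin N)) c
    else 0

lemma Bmat_band (k : ℕ) (e : Fin N → ℂ) (M2 : Matrix (Fin N) (Fin N) ℂ) :
    BandP k (Bmat k e M2) := by
  intro n l h
  unfold Bmat
  rw [if_neg (by omega)]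

lemma mul_Amat (h2 : 2 ≤ N) (e : Fin N → ℂ) (C : Matrix (Fin N) (Fin N) ℂ) (n l : Fin N) :
    (Amat e * C) n l = C n l + e n * C (n+1) l := by
  rw [Matrix.mul_apply]
  have hsp : ∀ j : Fin N, Amat e n j * C j l
      = (if j = n then C j l else 0) + (if j = n + 1 then e n * C j l else 0) := by
    intro j
    unfold Amat
    by_cases hj1 : j = n
    · subst hj1
      rw [if_pos rfl, if_pos rfl, if_neg (ne_add_one j h2), one_mul, add_zero]
    · rw [if_neg hj1, if_neg hj1]
      by_cases hj2 : j = n + 1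
      · rw [if_pos hj2, if_pos hj2, zero_add]
      · rw [if_neg hj2, if_neg hj2, zero_mul, add_zero]
  rw [Finset.sum_congr rfl (fun j _ => hsp j), Finset.sum_add_distrib,
    Finset.sum_ite_eq' Finset.univ n (fun j => C j l),
    Finset.sum_ite_eq' Finset.univ (n+1) (fun j => e n * C j l),
    if_pos (Finset.mem_univ _), if_pos (Finset.mem_univ _)]

lemma peel (k : ℕ) (hk : 1 ≤ k) (hkN : k + 2 ≤ N) (M2 : Matrix (Fin N) (Fin N) ℂ)
    (hband : BandP (k+1) M2) (e : Fin N → ℂ)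
    (hstar : ∀ n : Fin N, ∑ m ∈ Finset.range (k+2),
        (-1:ℂ)^m * (∏ i ∈ Finset.range m, e (n + (i : Fin N)))
          * M2 (n + (m : Fin N)) (n + ((k+1 : ℕ) : Fin N)) = 0) :
    Amat e * Bmat k e M2 = M2 := by
  have h2 : 2 ≤ N := by omega
  ext n l
  rw [mul_Amat h2]
  by_cases hln : l = n
  · subst hln
    have hB0 : Bmat k e M2 l l
        = M2 l l := by
      unfold Bmat
      rw [sub_self, Fin.val_zero, if_pos (by omega), Finset.sum_range_one]
      simp
    have hB1 : Bmat k e M2 (l+1) l = 0 := by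
      unfold Bmat
      rw [neg_one_val h2, if_neg (by omega)]
    rw [hB0, hB1, mul_zero, add_zero]
  · -- l ≠ n
    set a := (l - n).val with ha
    have ha1 : 1 ≤ a := val_pos hln
    have haN : a < N := val_lt _
    have hsub : (l - (n+1)).val = a - 1 := sub_val_eq hln
    -- shift identities
    have hidx : ∀ m : ℕ, (n+1) + (m : Fin N) = n + ((m+1 : ℕ) : Fin N) := by
      intro m; push_cast; ring
    have hTshift : ∀ m : ℕ,
        e n * ((-1:ℂ)^m * (∏ i ∈ Finset.range m, e ((n+1) + (i : Fin N)))
            * M2 ((n+1) + (m : Fin N)) l)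
        = -((-1:ℂ)^(m+1) * (∏ i ∈ Finset.range (m+1), e (n + (i : Fin N)))
            * M2 (n + ((m+1 : ℕ) : Fin N)) l) := by
      intro m
      rw [hidx m, Finset.prod_range_succ' (fun i => e (n + (i : Fin N))) m,
        show (∏ i ∈ Finset.range m, e ((n+1) + (i : Fin N)))
            = ∏ i ∈ Finset.range m, e (n + ((i+1 : ℕ) : Fin N)) from
          Finset.prod_congr rfl (fun i _ => congrArg e (hidx i))]
      simp only [Nat.cast_zero, add_zero]
      ring
    by_cases hak : a ≤ k
    · -- middle band: telescoping cancellation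
      have hBn : Bmat k e M2 n l = (∑ m ∈ Finset.range a,
            (-1:ℂ)^(m+1) * (∏ i ∈ Finset.range (m+1), e (n + (i : Fin N)))
              * M2 (n + ((m+1 : ℕ) : Fin N)) l) + M2 n l := by
        unfold Bmat
        rw [← ha, if_pos hak, Finset.sum_range_succ' _ a]
        simp
      have hBn1 : Bmat k e M2 (n+1) l = ∑ m ∈ Finset.range a,
          (-1:ℂ)^m * (∏ i ∈ Finset.range m, e ((n+1) + (i : Fin N)))
            * M2 ((n+1) + (m : Fin N)) l := by
        unfold Bmat
        rw [hsub, if_pos (by omega), show (a - 1) + 1 = a by omega]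
      rw [hBn, hBn1, Finset.mul_sum,
        Finset.sum_congr rfl (fun m _ => hTshift m), Finset.sum_neg_distrib]
      ring
    · by_cases hak1 : a = k + 1
      · -- top band: uses the star equations
        have hBn : Bmat k e M2 n l = 0 := by
          unfold Bmat; rw [← ha, if_neg (by omega)]
        have hBn1 : Bmat k e M2 (n+1) l = ∑ m ∈ Finset.range (k+1),
            (-1:ℂ)^m * (∏ i ∈ Finset.range m, e ((n+1) + (i : Fin N)))
              * M2 ((n+1) + (m : Fin N)) l := by
          unfold Bmat
          rw [hsub, hak1, if_pos (by omega), show (k + 1 - 1) + 1 = k + 1 by omega]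
        have hl : l = n + ((k+1 : ℕ) : Fin N) := by
          rw [eq_add_val n l, ← ha, hak1]
        have hstar' := hstar n
        rw [← hl] at hstar'
        rw [Finset.sum_range_succ' _ (k+1)] at hstar'
        simp only [Nat.cast_zero, add_zero, pow_zero, Finset.range_zero,
          Finset.prod_empty, one_mul, mul_one] at hstar'
        rw [hBn, hBn1, Finset.mul_sum,
          Finset.sum_congr rfl (fun m _ => hTshift m), Finset.sum_neg_distrib]
        linear_combination -hstar'
      · -- beyond band: everything vanishes
        have hBn : Bmat k e M2 n l = 0 := by
          unfold Bmat; rw [← ha, if_neg (by omega)]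
        have hBn1 : Bmat k e M2 (n+1) l = 0 := by
          unfold Bmat; rw [hsub, if_neg (by omega)]
        rw [hBn, hBn1, hband n l (by omega), mul_zero, add_zero]


def PApprox (k : ℕ) (M : Matrix (Fin N) (Fin N) ℂ) : Prop :=
  ∀ ε : ℝ, 0 < ε → ∃ (X : Matrix (Fin N) (Fin N) ℂ) (L : List (Matrix (Fin N) (Fin N) ℂ)),
    L.length = k ∧ (∀ A ∈ L, sprP A) ∧ X = L.prod ∧ ∀ n l, ‖X n l - M n l‖ < ε

lemma approx_base (h2 : 2 ≤ N) (M : Matrix (Fin N) (Fin N) ℂ) (hM : BandP 1 M) :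
    PApprox 1 M := by
  intro ε hε
  refine ⟨M, [M], rfl, ?_, by simp, fun n l => by simpa using hε⟩
  intro A hA
  rw [List.mem_singleton] at hA
  subst hA
  intro n l h1 hadd
  apply hM
  have hv1 := val_pos h1
  rcases Nat.lt_or_ge 1 ((l - n).val) with h | h
  · exact h
  · exfalso
    have : (l - n).val = 1 := by omega
    have : l - n = (1 : Fin N) := by
      rw [← cast_val (l - n), this, Nat.cast_one]
    exact hadd (by linear_combination this)

lemma exists_small_good (η : ℝ) (hη : 0 < η) (S : Finset ℂ) :
    ∃ t : ℝ, 0 < t ∧ t < η ∧ (t : ℂ) ∉ (S : Set ℂ) := by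
  have hfin : {x : ℝ | (x : ℂ) ∈ (S : Set ℂ)}.Finite := by
    apply Set.Finite.preimage _ (S.finite_toSet)
    exact fun a _ b _ h => by exact_mod_cast h
  have hinf : (Set.Ioo (0:ℝ) η).Infinite := Set.Ioo_infinite hη
  have : ¬ (Set.Ioo (0:ℝ) η ⊆ {x : ℝ | (x : ℂ) ∈ (S : Set ℂ)}) := by
    intro hsub
    exact hinf (hfin.subset hsub)
  obtain ⟨t, ht, htn⟩ := Set.not_subset.1 this
  exact ⟨t, ht.1, ht.2, htn⟩

lemma approx_step (k : ℕ) (hk : 1 ≤ k) (hkN : k + 2 ≤ N)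
    (IH : ∀ B : Matrix (Fin N) (Fin N) ℂ, BandP k B → PApprox k B) :
    ∀ M : Matrix (Fin N) (Fin N) ℂ, BandP (k+1) M → PApprox (k+1) M := by
  intro M hM ε hε
  have hk'N : k + 1 < N := by omega
  have h2 : 2 ≤ N := by omega
  have hνk' : (((k+1 : ℕ) : Fin N)).val = k + 1 := val_cast _ hk'N
  -- STEP 1 : make the two relevant diagonals nonzero
  obtain ⟨t, ht0, htε, htS⟩ := exists_small_good (ε/3) (by linarith)
    ((Finset.univ.image fun n : Fin N => -(M n n)) ∪
     (Finset.univ.image fun n : Fin N => -(M n (n + ((k+1 : ℕ) : Fin N)))))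
  set M1 : Matrix (Fin N) (Fin N) ℂ := fun r c =>
    M r c + (if c = r then (t:ℂ) else 0) + (if c = r + ((k+1 : ℕ) : Fin N) then (t:ℂ) else 0)
    with hM1def
  have hkne : ((k+1 : ℕ) : Fin N) ≠ 0 := by
    intro h
    have := congrArg Fin.val h
    rw [hνk', Fin.val_zero] at this
    omega
  have hM1d : ∀ n, M1 n n ≠ 0 := by
    intro n
    have hcond : ¬ (n = n + ((k+1:ℕ) : Fin N)) := fun h => hkne (by linear_combination -h)
    simp only [hM1def, eq_self_iff_true, if_true, if_neg hcond, add_zero]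
    intro h
    apply htS
    simp only [Finset.coe_union, Set.mem_union, Finset.coe_image, Set.mem_image]
    exact Or.inl ⟨n, by simp, by linear_combination -h⟩
  have hM1o : ∀ n, M1 n (n + ((k+1 : ℕ) : Fin N)) ≠ 0 := by
    intro n
    have hcond : ¬ (n + ((k+1:ℕ) : Fin N) = n) := fun h => hkne (by linear_combination h)
    simp only [hM1def, eq_self_iff_true, if_true, if_neg hcond, add_zero]
    intro h
    apply htS
    simp only [Finset.coe_union, Set.mem_union, Finset.coe_image, Set.mem_image]
    exact Or.inr ⟨n, by simp, by linear_combination -h⟩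
  have hM1band : BandP (k+1) M1 := by
    intro n l h
    have hcond1 : ¬ (l = n) := by
      intro hc
      rw [hc, sub_self, Fin.val_zero] at h
      omega
    have hcond2 : ¬ (l = n + ((k+1:ℕ) : Fin N)) := by
      intro hc
      rw [hc] at h
      have he : (n + ((k+1:ℕ) : Fin N) - n) = ((k+1 : ℕ) : Fin N) := by ring
      rw [he, hνk'] at h
      omega
    simp only [hM1def, if_neg hcond1, if_neg hcond2, add_zero, hM n l h]
  have habs : ‖(t : ℂ)‖ = t := by
    rw [Complex.norm_real, Real.norm_eq_abs, abs_of_pos ht0]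
  have hM1close : ∀ n l, ‖M1 n l - M n l‖ ≤ t := by
    intro n l
    by_cases hc1 : l = n
    · have hcond : ¬ (l = n + ((k+1:ℕ) : Fin N)) := by
        intro hc2
        rw [hc1] at hc2
        exact hkne (by linear_combination -hc2)
      simp only [hM1def, if_pos hc1, if_neg hcond, add_zero]
      simpa using le_of_eq habs
    · by_cases hc2 : l = n + ((k+1:ℕ) : Fin N)
      · simp only [hM1def, if_pos hc2, if_neg hc1, zero_add]
        simpa using le_of_eq habs
      · simp only [hM1def, if_neg hc1, if_neg hc2, add_zero]
        simp [le_of_lt ht0]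
  -- STEP 2 : a root of the determinant polynomial
  have hcoeff := det_coeff_ne_zero (k+1) hk'N M1 hM1band hM1d
  have hdeg : 0 < ((phiP (k+1) M1).det).degree := by
    apply lt_of_lt_of_le _ (Polynomial.le_degree_of_ne_zero hcoeff)
    have hpos : 0 < N * (k+1) := by positivity
    exact_mod_cast hpos
  obtain ⟨μ, hroot⟩ := Complex.exists_root hdeg
  rw [Polynomial.IsRoot] at hroot
  have hμ0 : μ ≠ 0 := by
    rintro rfl
    rw [det_eval_zero (k+1) M1] at hroot
    exact (Finset.prod_ne_zero_iff.2 (fun n _ => hM1o n)) hroot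
  have hdet0 : (Matrix.of fun n j : Fin N =>
      M1 j (n + ((k+1:ℕ) : Fin N)) * μ ^ ((j - n).val)).det = 0 := by
    rw [← det_eval]; exact hroot
  obtain ⟨p0, hp0ne, hp0⟩ := Matrix.exists_mulVec_eq_zero_iff.2 hdet0
  have heq0 : ∀ n : Fin N, ∑ m ∈ Finset.range (k+1+1),
      M1 (n + (m : Fin N)) (n + ((k+1:ℕ) : Fin N)) * μ^m * p0 (n + (m : Fin N)) = 0 := by
    intro n
    have hv := congrFun hp0 n
    simp only [Matrix.mulVec, dotProduct, Matrix.of_apply, Pi.zero_apply] at hv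
    rw [← window_sum hM1band hk'N n (fun a => μ^a) p0]
    exact hv
  -- STEP 3 : perturb the kernel vector to be entrywise nonzero
  have hwin := window_nonzero (k+1) hk'N M1 hM1d μ hμ0 p0 hp0ne heq0
  choose msel hmsel1 hmsel2 using hwin
  have hune : (Finset.univ : Finset (Fin N)).Nonempty := ⟨0, Finset.mem_univ 0⟩
  set β := Finset.univ.inf' hune
      (fun c : Fin N => ‖μ ^ msel c * p0 (c + ((msel c : ℕ) : Fin N))‖) with hβ
  have hβpos : 0 < β := by
    rw [hβ, Finset.lt_inf'_iff]
    intro c _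
    exact norm_pos_iff.2 (mul_ne_zero (pow_ne_zero _ hμ0) (hmsel2 c))
  set Γ := Finset.univ.sup' hune (fun c : Fin N => ‖μ‖ ^ msel c) with hΓ
  have hΓpos : 0 < Γ := by
    rw [hΓ, Finset.lt_sup'_iff]
    exact ⟨0, Finset.mem_univ 0, pow_pos (norm_pos_iff.2 hμ0) _⟩
  set SB := Finset.univ.sup' hune (fun n : Fin N =>
      ‖∑ m ∈ Finset.range (k+1+1),
        M1 (n + (m : Fin N)) (n + ((k+1:ℕ) : Fin N)) * μ^m‖) with hSB
  have hSB0 : 0 ≤ SB := by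
    refine le_trans (norm_nonneg (∑ m ∈ Finset.range (k+1+1),
      M1 ((0 : Fin N) + (m : Fin N)) ((0 : Fin N) + ((k+1:ℕ) : Fin N)) * μ^m)) ?_
    exact Finset.le_sup' (fun n : Fin N => ‖∑ m ∈ Finset.range (k+1+1),
      M1 (n + (m : Fin N)) (n + ((k+1:ℕ) : Fin N)) * μ^m‖) (Finset.mem_univ (0 : Fin N))
  obtain ⟨δ, hδ0, hδlt, hδS⟩ := exists_small_good
      (min (β/(2*Γ)) ((ε/3)*(β/2)/(SB+1))) (by positivity)
      (Finset.univ.image fun j : Fin N => -(p0 j))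
  have hδΓ : δ * Γ ≤ β/2 := by
    have h1 : δ < β/(2*Γ) := lt_of_lt_of_le hδlt (min_le_left _ _)
    have h2 : (β/(2*Γ))*Γ = β/2 := by field_simp
    calc δ * Γ ≤ (β/(2*Γ)) * Γ := mul_le_mul_of_nonneg_right h1.le hΓpos.le
      _ = β/2 := h2
  have hδSB : δ * SB < (ε/3)*(β/2) := by
    have h1 : δ < (ε/3)*(β/2)/(SB+1) := lt_of_lt_of_le hδlt (min_le_right _ _)
    have h2 : δ * (SB+1) < (ε/3)*(β/2) := by
      rw [← lt_div_iff₀ (by linarith : (0:ℝ) < SB + 1)]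
      exact h1
    nlinarith
  set p : Fin N → ℂ := fun j => p0 j + (δ:ℂ) with hpdef
  have hp : ∀ j, p j ≠ 0 := by
    intro j h
    apply hδS
    simp only [Finset.coe_image, Set.mem_image]
    refine ⟨j, by simp, ?_⟩
    rw [hpdef] at h
    simp only at h
    linear_combination -h
  have hδabs : ‖(δ:ℂ)‖ = δ := by rw [Complex.norm_real, Real.norm_eq_abs, abs_of_pos hδ0]
  set r : Fin N → ℂ := fun n => ∑ m ∈ Finset.range (k+1+1),
      M1 (n + (m : Fin N)) (n + ((k+1:ℕ) : Fin N)) * μ^m * p (n + (m : Fin N)) with hrdef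
  have hrS : ∀ n, r n = (δ:ℂ) * ∑ m ∈ Finset.range (k+1+1),
      M1 (n + (m : Fin N)) (n + ((k+1:ℕ) : Fin N)) * μ^m := by
    intro n
    rw [hrdef]
    simp only [hpdef]
    have hterm : ∀ m ∈ Finset.range (k+1+1),
        M1 (n + (m:Fin N)) (n + ((k+1:ℕ) : Fin N)) * μ^m * (p0 (n + (m:Fin N)) + (δ:ℂ))
          = M1 (n + (m:Fin N)) (n + ((k+1:ℕ) : Fin N)) * μ^m * p0 (n + (m:Fin N))
            + (δ:ℂ) * (M1 (n + (m:Fin N)) (n + ((k+1:ℕ) : Fin N)) * μ^m) := fun m _ => by ring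
    rw [Finset.sum_congr rfl hterm, Finset.sum_add_distrib, heq0 n, zero_add, ← Finset.mul_sum]
  have hrb : ∀ n, ‖r n‖ ≤ δ * SB := by
    intro n
    rw [hrS n, norm_mul, hδabs]
    apply mul_le_mul_of_nonneg_left _ hδ0.le
    exact Finset.le_sup' (fun n : Fin N => ‖∑ m ∈ Finset.range (k+1+1),
      M1 (n + (m : Fin N)) (n + ((k+1:ℕ) : Fin N)) * μ^m‖) (Finset.mem_univ n)
  have hlow : ∀ n, β/2 ≤ ‖μ ^ msel n * p (n + ((msel n : ℕ) : Fin N))‖ := by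
    intro n
    have ha : β ≤ ‖μ ^ msel n * p0 (n + ((msel n:ℕ) : Fin N))‖ :=
      Finset.inf'_le (fun c : Fin N => ‖μ ^ msel c * p0 (c + ((msel c : ℕ) : Fin N))‖)
        (Finset.mem_univ n)
    have hb : ‖μ ^ msel n * (δ:ℂ)‖ ≤ β/2 := by
      rw [norm_mul, hδabs, norm_pow]
      calc ‖μ‖ ^ msel n * δ
          ≤ Γ * δ := mul_le_mul_of_nonneg_right
            (Finset.le_sup' (fun c : Fin N => ‖μ‖ ^ msel c) (Finset.mem_univ n)) hδ0.le
        _ ≤ β/2 := by rw [mul_comm]; exact hδΓ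
    have hsplit : μ ^ msel n * p0 (n + ((msel n:ℕ) : Fin N))
        = μ ^ msel n * p (n + ((msel n:ℕ) : Fin N)) - μ ^ msel n * (δ:ℂ) := by
      rw [hpdef]; ring
    have htri := norm_sub_le (μ ^ msel n * p (n + ((msel n:ℕ) : Fin N))) (μ ^ msel n * (δ:ℂ))
    rw [← hsplit] at htri
    linarith
  -- STEP 4 : project M1 so that the window equations hold exactly
  set M2 : Matrix (Fin N) (Fin N) ℂ := fun x y => M1 x y -
      (if x = (y - ((k+1:ℕ) : Fin N)) + ((msel (y - ((k+1:ℕ) : Fin N)) : ℕ) : Fin N)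
       then r (y - ((k+1:ℕ) : Fin N)) / (μ ^ msel (y - ((k+1:ℕ) : Fin N)) * p x) else 0)
    with hM2def
  have hsubadd : ∀ n : Fin N, (n + ((k+1:ℕ) : Fin N)) - ((k+1:ℕ) : Fin N) = n := by
    intro n; ring
  have hmselN : ∀ c : Fin N, msel c < N := fun c => lt_of_le_of_lt (hmsel1 c) hk'N
  have hM2band : BandP (k+1) M2 := by
    intro n l h
    have hz := hM1band n l h
    have hcond : ¬ (n = (l - ((k+1:ℕ) : Fin N))
        + ((msel (l - ((k+1:ℕ) : Fin N)) : ℕ) : Fin N)) := by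
      intro hc
      have hln : l - n = ((k+1:ℕ) : Fin N) - ((msel (l - ((k+1:ℕ) : Fin N)) : ℕ) : Fin N) := by
        rw [hc]; ring
      rw [hln, sub_cast_val (k+1) _ hk'N (hmselN _), if_pos (hmsel1 _)] at h
      omega
    rw [hM2def]
    simp only [if_neg hcond, sub_zero]
    exact hz
  have hM2close : ∀ x y, ‖M2 x y - M1 x y‖ ≤ (δ * SB)/(β/2) := by
    intro x y
    rw [hM2def]
    simp only
    by_cases hc : x = (y - ((k+1:ℕ) : Fin N)) + ((msel (y - ((k+1:ℕ) : Fin N)) : ℕ) : Fin N)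
    · rw [if_pos hc]
      rw [show M1 x y - (r (y - ((k+1:ℕ) : Fin N)) / (μ ^ msel (y - ((k+1:ℕ) : Fin N)) * p x))
            - M1 x y = -(r (y - ((k+1:ℕ) : Fin N)) / (μ ^ msel (y - ((k+1:ℕ) : Fin N)) * p x))
          from by ring, norm_neg, norm_div]
      apply div_le_div₀ (by positivity) (hrb _) (by linarith)
      rw [hc]
      exact hlow _
    · rw [if_neg hc, sub_zero, sub_self, norm_zero]
      positivity
  have hEQ2 : ∀ n : Fin N, ∑ m ∈ Finset.range (k+1+1),
      M2 (n + (m : Fin N)) (n + ((k+1:ℕ) : Fin N)) * μ^m * p (n + (m : Fin N)) = 0 := by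
    intro n
    have hterm : ∀ m ∈ Finset.range (k+1+1),
        M2 (n + (m : Fin N)) (n + ((k+1:ℕ) : Fin N)) * μ^m * p (n + (m : Fin N))
          = M1 (n + (m : Fin N)) (n + ((k+1:ℕ) : Fin N)) * μ^m * p (n + (m : Fin N))
            - (if m = msel n then r n else 0) := by
      intro m hm
      rw [Finset.mem_range] at hm
      rw [hM2def]
      simp only [hsubadd n]
      by_cases hc : m = msel n
      · subst hc
        rw [if_pos rfl, if_pos rfl]
        have hne1 : μ ^ msel n ≠ 0 := pow_ne_zero _ hμ0
        have hne2 : p (n + ((msel n : ℕ) : Fin N)) ≠ 0 := hp _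
        field_simp
      · rw [if_neg (show ¬ (n + (m : Fin N) = n + ((msel n : ℕ) : Fin N)) by
          intro hx
          apply hc
          have : ((m : ℕ) : Fin N) = ((msel n : ℕ) : Fin N) := by linear_combination hx
          have := congrArg Fin.val this
          rwa [val_cast m (by omega), val_cast (msel n) (hmselN n)] at this),
          if_neg hc, sub_zero, sub_zero]
    rw [Finset.sum_congr rfl hterm, Finset.sum_sub_distrib]
    have h1 : ∑ m ∈ Finset.range (k+1+1),
        M1 (n + (m : Fin N)) (n + ((k+1:ℕ) : Fin N)) * μ^m * p (n + (m : Fin N)) = r n := by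
      rw [hrdef]
    have h2 : ∑ m ∈ Finset.range (k+1+1), (if m = msel n then r n else 0) = r n := by
      rw [Finset.sum_ite_eq' (Finset.range (k+1+1)) (msel n) (fun _ => r n),
        if_pos (Finset.mem_range.2 (by have := hmsel1 n; omega))]
    rw [h1, h2, sub_self]
  -- STEP 5 : the star equations for the peeled factor
  set e : Fin N → ℂ := fun j => -μ * p (j + 1) / p j with hedef
  have hstar : ∀ n : Fin N, ∑ m ∈ Finset.range (k+2),
      (-1:ℂ)^m * (∏ i ∈ Finset.range m, e (n + (i : Fin N)))
        * M2 (n + (m : Fin N)) (n + ((k+1:ℕ) : Fin N)) = 0 := by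
    intro n
    have hterm : ∀ m ∈ Finset.range (k+2),
        (-1:ℂ)^m * (∏ i ∈ Finset.range m, e (n + (i : Fin N)))
            * M2 (n + (m : Fin N)) (n + ((k+1:ℕ) : Fin N))
          = (M2 (n + (m : Fin N)) (n + ((k+1:ℕ) : Fin N)) * μ^m * p (n + (m : Fin N))) / p n := by
      intro m _
      simp only [hedef]
      rw [telescope μ p hp n m]
      rw [show ((-1:ℂ))^m * ((-μ)^m * p (n + (m : Fin N)) / p n)
          = (μ^m * p (n + (m : Fin N))) / p n from by
        rw [show (μ : ℂ)^m = ((-1:ℂ))^m * (-μ)^m from by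
          rw [← mul_pow]; norm_num]
        ring]
      ring
    rw [Finset.sum_congr rfl hterm, ← Finset.sum_div, hEQ2 n, zero_div]
  -- STEP 6 : peel one factor and use the induction hypothesis
  have hAB := peel k hk hkN M2 hM2band e hstar
  set EB := ∑ n : Fin N, ‖e n‖ with hEBdef
  have hEBn : ∀ n, ‖e n‖ ≤ EB :=
    fun n => Finset.single_le_sum (fun i _ => norm_nonneg (e i)) (Finset.mem_univ n)
  have hEB0 : 0 ≤ EB := Finset.sum_nonneg fun i _ => norm_nonneg _
  obtain ⟨X, L, hLlen, hLspr, hXL, hXc⟩ := IH (Bmat k e M2) (Bmat_band k e M2)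
    ((ε/3)/(1+EB)) (div_pos (by linarith) (by linarith))
  refine ⟨Amat e * X, Amat e :: L, by simp [hLlen], ?_, by rw [List.prod_cons, hXL], ?_⟩
  · intro A hA
    rcases List.mem_cons.1 hA with h | h
    · rw [h]; exact Amat_spr e
    · exact hLspr A h
  · intro n l
    have h1 : (Amat e * X) n l - M2 n l
        = (X n l - Bmat k e M2 n l) + e n * (X (n+1) l - Bmat k e M2 (n+1) l) := by
      have hL : (Amat e * X) n l = X n l + e n * X (n+1) l := mul_Amat h2 e X n l
      have hR : M2 n l = Bmat k e M2 n l + e n * Bmat k e M2 (n+1) l := by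
        conv_lhs => rw [← hAB]
        exact mul_Amat h2 e (Bmat k e M2) n l
      rw [hL, hR]
      ring
    have hA1 : ‖(Amat e * X) n l - M2 n l‖ < ε/3 := by
      rw [h1]
      have hb1 := hXc n l
      have hb2 : ‖e n‖ * ‖X (n+1) l - Bmat k e M2 (n+1) l‖ ≤ EB * ((ε/3)/(1+EB)) :=
        mul_le_mul (hEBn n) (le_of_lt (hXc (n+1) l)) (norm_nonneg _) hEB0
      have htri := norm_add_le (X n l - Bmat k e M2 n l)
        (e n * (X (n+1) l - Bmat k e M2 (n+1) l))
      rw [norm_mul] at htri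
      have hfin : (ε/3)/(1+EB) + EB * ((ε/3)/(1+EB)) = ε/3 := by
        field_simp
      linarith
    have hA2 : ‖M2 n l - M1 n l‖ < ε/3 := by
      refine lt_of_le_of_lt (hM2close n l) ?_
      rw [div_lt_iff₀ (by linarith : (0:ℝ) < β/2)]
      exact hδSB
    have hA3 : ‖M1 n l - M n l‖ < ε/3 := lt_of_le_of_lt (hM1close n l) htε
    have key : (Amat e * X) n l - M n l
        = ((Amat e * X) n l - M2 n l) + (M2 n l - M1 n l) + (M1 n l - M n l) := by ring
    calc ‖(Amat e * X) n l - M n l‖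
        ≤ ‖(Amat e * X) n l - M2 n l‖ + ‖M2 n l - M1 n l‖ + ‖M1 n l - M n l‖ := by
          rw [key]
          exact norm_add₃_le
      _ < ε := by linarith

lemma approx_all (h2 : 2 ≤ N) : ∀ k, 1 ≤ k → k + 1 ≤ N →
    ∀ M : Matrix (Fin N) (Fin N) ℂ, BandP k M → PApprox k M := by
  intro k
  induction k with
  | zero => omega
  | succ k ih =>
    intro _ hkN M hM
    rcases Nat.eq_zero_or_pos k with hk0 | hkpos
    · subst hk0
      exact approx_base h2 M hM
    · exact approx_step k hkpos (by omega) (fun B hB => ih hkpos (by omega) B hB) M hM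

lemma sprP_to_spr (hN : 0 < N) (Q : Matrix (Fin N) (Fin N) ℂ) (hQ : sprP Q) :
    Q ∈ spr (cycleMat N) := by
  intro n l hc
  by_cases hcond : l = n ∨ (l : ℕ) = ((n : ℕ) + 1) % N
  · exfalso
    unfold cycleMat at hc
    rw [Matrix.of_apply, if_pos hcond] at hc
    exact one_ne_zero hc
  · push_neg at hcond
    exact hQ n l hcond.1 (fun h => hcond.2 ((add_one_iff_val n l).1 h))

end CycFact

/-- For the directed cycle with self-loops on `N` vertices, the set of
`N`-fold products `A_N A_{N-1} ⋯ A_1` with each `A_i ∈ spr(C̄)` is dense in the space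
of N×N complex matrices. -/
theorem cycle_products_dense (N : ℕ) (hN : 0 < N) :
    Dense {T : Matrix (Fin N) (Fin N) ℂ |
      ∃ A : Fin N → Matrix (Fin N) (Fin N) ℂ,
        (∀ i, A i ∈ spr (cycleMat N)) ∧ T = (List.ofFn A).reverse.prod} := by
  haveI : NeZero N := ⟨hN.ne'⟩
  set S := {T : Matrix (Fin N) (Fin N) ℂ |
      ∃ A : Fin N → Matrix (Fin N) (Fin N) ℂ,
        (∀ i, A i ∈ spr (cycleMat N)) ∧ T = (List.ofFn A).reverse.prod} with hS
  intro T
  have happrox : ∀ ε : ℝ, 0 < ε → ∃ X ∈ S, ∀ n l, ‖X n l - T n l‖ < ε := by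
    intro ε hε
    by_cases hN1 : N = 1
    · subst hN1
      refine ⟨T, ?_, fun n l => by simpa using hε⟩
      rw [hS]
      refine ⟨fun _ => T, fun i => ?_, ?_⟩
      · intro n l hc
        exfalso
        unfold cycleMat at hc
        rw [Matrix.of_apply, if_pos (Or.inl (Subsingleton.elim l n))] at hc
        exact one_ne_zero hc
      · simp
    · have h2 : 2 ≤ N := by omega
      have hT : CycFact.BandP (N-1) T := by
        intro n l h
        exact absurd (CycFact.val_lt (l - n)) (by omega)
      obtain ⟨X, L, hLlen, hLspr, hXL, hXc⟩ :=
        CycFact.approx_all h2 (N-1) (by omega) (by omega) T hT ε hε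
      refine ⟨X, ?_, hXc⟩
      rw [hS]
      set L' := (1 : Matrix (Fin N) (Fin N) ℂ) :: L with hL'
      have hL'spr : ∀ A ∈ L', CycFact.sprP A := by
        intro A hA
        rcases List.mem_cons.1 hA with h | h
        · rw [h]
          intro n l h1 _
          exact Matrix.one_apply_ne (Ne.symm h1)
        · exact hLspr A h
      have hlen : L'.reverse.length = N := by
        simp [hL', hLlen]
        omega
      obtain ⟨A, hA⟩ : ∃ A : Fin N → Matrix (Fin N) (Fin N) ℂ,
          List.ofFn A = L'.reverse := by
        refine ⟨fun i => L'.reverse.get (Fin.cast hlen.symm i), ?_⟩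
        apply List.ext_get (by simp [hlen])
        intro i h1 h2
        simp [List.get_ofFn]
      refine ⟨A, fun i => ?_, ?_⟩
      · apply CycFact.sprP_to_spr hN
        apply hL'spr
        rw [← List.mem_reverse, ← hA]
        exact List.mem_ofFn.2 ⟨i, rfl⟩
      · rw [hA, List.reverse_reverse, hL', List.prod_cons, one_mul, hXL]
  have hseq : ∀ j : ℕ, ∃ X ∈ S, ∀ n l, ‖X n l - T n l‖ < 1/((j:ℝ)+1) :=
    fun j => happrox _ (by positivity)
  choose u hu hud using hseq
  apply mem_closure_of_tendsto (f := u) (b := Filter.atTop) ?_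
    (Filter.Eventually.of_forall hu)
  refine tendsto_pi_nhds.2 ?_
  intro n
  rw [tendsto_pi_nhds]
  intro l
  apply tendsto_iff_dist_tendsto_zero.2
  apply squeeze_zero (fun j => dist_nonneg) (fun j => ?_)
    tendsto_one_div_add_atTop_nhds_zero_nat
  rw [dist_eq_norm]
  exact (hud j n l).le
end

section
/- Let C̄ ∈ {0,1}^{N×N} be the adjacency matrix of the directed cycle with self-loops on N vertices, and for 1 ≤ k ≤ N−1 let Ā_k ∈ {0,1}^{N×N} be the structural matrix of C̄^k (i.e., (Ā_k)_{n,l} = 1 iff the (n,l) entry of the nonnegative matrix power C̄^k is nonzero). Then the ordered pair (Ā_k, C̄) is compatible, i.e., both matrices have all diagonal entries equal to 1 and E(C̄) ⊆ E(Ā_k), and the product Ā_k C̄ is a simple extension of (Ā_k, C̄): for every (m,l) ∈ E(C̄), the set {(n,l) ∈ E(Ā_k C̄) \ E(Ā_k) : (Ā_k)_{n,m} C̄_{m,l} ≠ 0} has at most one element. -/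
open Matrix

/-- The support `E(M)` of a matrix: the set of index pairs where `M` is nonzero. -/
def Esupp {N : ℕ} (M : Matrix (Fin N) (Fin N) ℝ) : Set (Fin N × Fin N) :=
  {p | M p.1 p.2 ≠ 0}

/-- An ordered pair `(A, B)` of 0-1 matrices is compatible if both are 0-1 matrices with
all diagonal entries equal to 1 and `E(B) ⊆ E(A)`. -/
def Compatible {N : ℕ} (A B : Matrix (Fin N) (Fin N) ℝ) : Prop :=
  (∀ n l, A n l = 0 ∨ A n l = 1) ∧ (∀ n l, B n l = 0 ∨ B n l = 1) ∧
    (∀ n, A n n = 1) ∧ (∀ n, B n n = 1) ∧ Esupp B ⊆ Esupp A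

/-- For a pair `(A, B)` and `(m, l) ∈ E(B)`, the set
`β_{(m,l)}(B) = {(n,l) ∈ E(AB) \ E(A) : A_{n,m} B_{m,l} ≠ 0}`. -/
def betaSet {N : ℕ} (A B : Matrix (Fin N) (Fin N) ℝ) (m l : Fin N) :
    Set (Fin N × Fin N) :=
  {p | p ∈ Esupp (A * B) \ Esupp A ∧ p.2 = l ∧ A p.1 m * B m l ≠ 0}

/-- The product `A * B` is a simple extension of the compatible pair `(A, B)` if
`|β_{(m,l)}(B)| ≤ 1` for every `(m, l) ∈ E(B)`. -/
def SimpleExtension {N : ℕ} (A B : Matrix (Fin N) (Fin N) ℝ) : Prop :=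
  ∀ m l : Fin N, B m l ≠ 0 → (betaSet A B m l).Subsingleton

/-- The structural (0-1) matrix of a real matrix `M`: entry `1` where `M` is nonzero and
`0` elsewhere. -/
noncomputable def structMat {N : ℕ} (M : Matrix (Fin N) (Fin N) ℝ) :
    Matrix (Fin N) (Fin N) ℝ :=
  Matrix.of fun n l => if M n l = 0 then 0 else 1

/-!
Write `d(n, l)` for the cyclic distance `((l - n : Fin N) : ℕ)` from `n` forward to `l`. The
support of `C̄` is `{d ≤ 1}`, and since `d` satisfies the triangle inequality and every distance
`d(n, l) ≥ 1` is realised through a predecessor of `l`, the support of `C̄ ^ k` is `{d ≤ k}`.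
Hence `E(Ā_k C̄) \ E(Ā_k)` consists of the pairs with `d(n, l) = k + 1`, and for a fixed `l`
at most one `n` has this distance, because `n ↦ l - n` is injective.
-/

theorem Matrix.mul_apply_ne_zero_iff_of_nonneg {l m n R : Type*} [Fintype m] [Semiring R]
    [PartialOrder R] [IsOrderedRing R] [NoZeroDivisors R] {A : Matrix l m R} {B : Matrix m n R}
    (hA : ∀ i j, 0 ≤ A i j) (hB : ∀ i j, 0 ≤ B i j) (i : l) (k : n) :
    (A * B) i k ≠ 0 ↔ ∃ j, A i j ≠ 0 ∧ B j k ≠ 0 := by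
  rw [Matrix.mul_apply, Ne,
    Finset.sum_eq_zero_iff_of_nonneg fun j _ => mul_nonneg (hA i j) (hB j k)]
  simp only [Finset.mem_univ, true_implies, not_forall, mul_ne_zero_iff]

theorem Fin.val_sub_le_val_sub_add_val_sub {N : ℕ} [NeZero N] (n m l : Fin N) :
    ((l - n : Fin N) : ℕ) ≤ ((m - n : Fin N) : ℕ) + ((l - m : Fin N) : ℕ) := by
  rw [← sub_add_sub_cancel' m n l, Fin.val_add]
  exact Nat.mod_le _ _

theorem Fin.exists_sub_le_and_sub_le_one_iff {N : ℕ} [NeZero N] (k : ℕ) (n l : Fin N) :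
    (∃ m : Fin N, ((m - n : Fin N) : ℕ) ≤ k ∧ ((l - m : Fin N) : ℕ) ≤ 1) ↔
      ((l - n : Fin N) : ℕ) ≤ k + 1 := by
  refine ⟨fun ⟨m, hm, hl⟩ => (Fin.val_sub_le_val_sub_add_val_sub n m l).trans (by omega),
    fun h => ?_⟩
  rcases Nat.lt_or_ge k ((l - n : Fin N) : ℕ) with hfar | hnear
  · set d := l - n with hd
    let j : Fin N := ⟨(d : ℕ) - 1, by omega⟩
    have hjd : j ≤ d := by rw [Fin.le_def]; simp only [j]; omega
    refine ⟨n + j, ?_, ?_⟩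
    · rw [add_sub_cancel_left]; simp only [j]; omega
    · rw [sub_add_eq_sub_sub, ← hd, Fin.coe_sub_iff_le.2 hjd]; simp only [j]; omega
  · exact ⟨l, hnear, by simp⟩

section StructMat

variable {N : ℕ} (M : Matrix (Fin N) (Fin N) ℝ) (n l : Fin N)

theorem structMat_apply_eq_one_iff : structMat M n l = 1 ↔ M n l ≠ 0 := by
  by_cases h : M n l = 0 <;> simp [structMat, h]

theorem structMat_apply_ne_zero_iff : structMat M n l ≠ 0 ↔ M n l ≠ 0 := by
  by_cases h : M n l = 0 <;> simp [structMat, h]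

theorem structMat_apply_eq_zero_or_eq_one : structMat M n l = 0 ∨ structMat M n l = 1 := by
  by_cases h : M n l = 0 <;> simp [structMat, h]

theorem structMat_apply_nonneg : 0 ≤ structMat M n l := by
  rcases structMat_apply_eq_zero_or_eq_one M n l with h | h <;> simp [h]

end StructMat

section CycleMat

variable {N : ℕ}

theorem cycleMat_apply_eq_zero_or_eq_one (n l : Fin N) :
    cycleMat N n l = 0 ∨ cycleMat N n l = 1 := by
  simp only [cycleMat, Matrix.of_apply]; split_ifs <;> simp

theorem cycleMat_apply_nonneg (n l : Fin N) : 0 ≤ cycleMat N n l := by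
  rcases cycleMat_apply_eq_zero_or_eq_one n l with h | h <;> simp [h]

theorem cycleMat_apply_self (n : Fin N) : cycleMat N n n = 1 := by
  simp [cycleMat]

theorem cycleMat_apply_ne_zero_iff (n l : Fin N) :
    cycleMat N n l ≠ 0 ↔ ((l - n : Fin N) : ℕ) ≤ 1 := by
  have hn := n.isLt
  have hsucc : ((n : ℕ) + 1) % N = if (n : ℕ) + 1 < N then (n : ℕ) + 1 else 0 := by
    split_ifs with h
    · exact Nat.mod_eq_of_lt h
    · rw [show (n : ℕ) + 1 = N by omega, Nat.mod_self]
  simp only [cycleMat, Matrix.of_apply, ne_eq, ite_eq_right_iff, one_ne_zero, imp_false,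
    not_not, Fin.ext_iff, hsucc]
  rcases le_or_gt n l with h | h
  · rw [Fin.coe_sub_iff_le.2 h]; rw [Fin.le_def] at h; split_ifs <;> omega
  · rw [Fin.coe_sub_iff_lt.2 h]; rw [Fin.lt_def] at h; split_ifs <;> omega

variable [NeZero N]

theorem cycleMat_pow_apply_ne_zero_iff (k : ℕ) (n l : Fin N) :
    (cycleMat N ^ k) n l ≠ 0 ↔ ((l - n : Fin N) : ℕ) ≤ k := by
  induction k generalizing l with
  | zero => simp [Matrix.one_apply, sub_eq_zero, eq_comm]
  | succ k ih =>
    rw [pow_succ, Matrix.mul_apply_ne_zero_iff_of_nonneg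
      (Matrix.pow_apply_nonneg cycleMat_apply_nonneg k) cycleMat_apply_nonneg,
      ← Fin.exists_sub_le_and_sub_le_one_iff]
    exact exists_congr fun m => and_congr (ih m) (cycleMat_apply_ne_zero_iff m l)

end CycleMat

section CyclePower

variable {N : ℕ} [NeZero N] (k : ℕ)

theorem structMat_cycleMat_pow_apply_ne_zero_iff (n l : Fin N) :
    structMat (cycleMat N ^ k) n l ≠ 0 ↔ ((l - n : Fin N) : ℕ) ≤ k :=
  (structMat_apply_ne_zero_iff _ n l).trans (cycleMat_pow_apply_ne_zero_iff k n l)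

theorem structMat_cycleMat_pow_mul_cycleMat_apply_ne_zero_iff (n l : Fin N) :
    (structMat (cycleMat N ^ k) * cycleMat N) n l ≠ 0 ↔ ((l - n : Fin N) : ℕ) ≤ k + 1 := by
  rw [Matrix.mul_apply_ne_zero_iff_of_nonneg (structMat_apply_nonneg _) cycleMat_apply_nonneg,
    ← Fin.exists_sub_le_and_sub_le_one_iff]
  exact exists_congr fun m =>
    and_congr (structMat_cycleMat_pow_apply_ne_zero_iff k n m) (cycleMat_apply_ne_zero_iff m l)

theorem compatible_structMat_cycleMat_pow (hk : 1 ≤ k) :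
    Compatible (structMat (cycleMat N ^ k)) (cycleMat N) := by
  refine ⟨structMat_apply_eq_zero_or_eq_one _, cycleMat_apply_eq_zero_or_eq_one,
    fun n => ?_, cycleMat_apply_self, fun p hp => ?_⟩
  · rw [structMat_apply_eq_one_iff, cycleMat_pow_apply_ne_zero_iff, sub_self, Fin.val_zero]
    exact Nat.zero_le k
  · have hp' := (cycleMat_apply_ne_zero_iff p.1 p.2).1 hp
    exact (structMat_cycleMat_pow_apply_ne_zero_iff k p.1 p.2).2 (hp'.trans hk)

theorem simpleExtension_structMat_cycleMat_pow :
    SimpleExtension (structMat (cycleMat N ^ k)) (cycleMat N) := by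
  have dist_eq : ∀ {m l : Fin N} {p},
      p ∈ betaSet (structMat (cycleMat N ^ k)) (cycleMat N) m l →
        ((l - p.1 : Fin N) : ℕ) = k + 1 := by
    rintro m l ⟨n, l'⟩ ⟨⟨hAC, hA⟩, rfl : l' = l, -⟩
    have h₁ := (structMat_cycleMat_pow_mul_cycleMat_apply_ne_zero_iff k n l').1 hAC
    have h₂ := (structMat_cycleMat_pow_apply_ne_zero_iff k n l').not.1 hA
    dsimp only
    omega
  intro m l _ p hp q hq
  have hpq : l - p.1 = l - q.1 := Fin.ext ((dist_eq hp).trans (dist_eq hq).symm)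
  exact Prod.ext (sub_right_injective hpq) (hp.2.1.trans hq.2.1.symm)

end CyclePower

theorem cycle_pow_compatible_simpleExtension_general (N k : ℕ) (hk1 : 1 ≤ k) :
    Compatible (structMat (cycleMat N ^ k)) (cycleMat N) ∧
    SimpleExtension (structMat (cycleMat N ^ k)) (cycleMat N) := by
  rcases N.eq_zero_or_pos with rfl | hN
  · exact ⟨⟨finZeroElim, finZeroElim, finZeroElim, finZeroElim, fun p => p.1.elim0⟩,
      finZeroElim⟩
  · have : NeZero N := NeZero.of_pos hN
    exact ⟨compatible_structMat_cycleMat_pow k hk1, simpleExtension_structMat_cycleMat_pow k⟩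

/-- For the directed cycle with self-loops `C̄` on `N` vertices and
`1 ≤ k ≤ N - 1`, let `Ā_k` be the structural matrix of the nonnegative power `C̄^k`.
Then the ordered pair `(Ā_k, C̄)` is compatible and the product `Ā_k * C̄` is a simple
extension of `(Ā_k, C̄)`. -/
theorem cycle_pow_compatible_simpleExtension (N k : ℕ) (hk1 : 1 ≤ k) (hkN : k ≤ N - 1) :
    Compatible (structMat (cycleMat N ^ k)) (cycleMat N) ∧
    SimpleExtension (structMat (cycleMat N ^ k)) (cycleMat N) :=
  cycle_pow_compatible_simpleExtension_general N k hk1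
end
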